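/- Let φ be a Finsler norm on ℝ^d with the gauge φ_ζ of E_ζ = {φ ≤ 1} + B̄_ζ(0). If ζ > 0, q* ∈ ∂E_ζ, and q̄* ∈ {φ = 1} is the unique closest point of {φ ≤ 1} to q*, then φ*(q* − q̄*)^{-1}(q* − q̄*) ∈ ∂φ(q̄*) and ⟨q* − q̄*, q*⟩ = sup{⟨q* − q̄*, q⟩ : q ∈ E_ζ}. -/

import Mathlib

open scoped InnerProductSpace RealInnerProductSpace Pointwise

/-!
Since `q̄*` is the metric projection of `q*` onto the convex set `K = {φ ≤ 1}`, the vector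
`v = q* - q̄*` is an outer normal of `K` at `q̄*`: the functional `⟪v, ·⟫` attains its maximum
over `K` at `q̄*`. Hence `φ*(v) = ⟪v, q̄*⟫ > 0`, and by homogeneity `⟪v, y⟫ ≤ φ*(v) φ(y)` for
all `y`, which is the subgradient inequality at `q̄*` (where `φ = 1`). Thickening `K` by the
ball of radius `ζ = ‖v‖` raises that maximum by `⟪v, v⟫`, and it is attained at `q̄* + v = q*`.
-/

section Normal

variable {E : Type*} [NormedAddCommGroup E] [InnerProductSpace ℝ E]

theorem isGreatest_inner_image_of_infDist_eq_norm_sub {K : Set E} (hK : Convex ℝ K)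
    {x p : E} (hp : p ∈ K) (hdist : Metric.infDist x K = ‖x - p‖) :
    IsGreatest ((fun w => ⟪x - p, w⟫_ℝ) '' K) ⟪x - p, p⟫_ℝ := by
  have hinf : ‖x - p‖ = ⨅ w : K, ‖x - w‖ := by
    simp_rw [← hdist, Metric.infDist_eq_iInf, dist_eq_norm]
  refine ⟨⟨p, hp, rfl⟩, ?_⟩
  rintro _ ⟨w, hw, rfl⟩
  have := (norm_eq_iInf_iff_real_inner_le_zero hK hp).mp hinf w hw
  rw [inner_sub_right] at this
  linarith

theorem IsGreatest.inner_image_add_closedBall {K : Set E} {v p : E}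
    (h : IsGreatest ((fun w => ⟪v, w⟫_ℝ) '' K) ⟪v, p⟫_ℝ) :
    IsGreatest ((fun w => ⟪v, w⟫_ℝ) '' (K + Metric.closedBall 0 ‖v‖)) ⟪v, p + v⟫_ℝ := by
  obtain ⟨⟨p', hp', hp'_eq⟩, hmax⟩ := h
  refine ⟨⟨p' + v, Set.add_mem_add hp' (by simp), ?_⟩, ?_⟩
  · simp only [inner_add_right, hp'_eq]
  rintro _ ⟨_, ⟨w, hw, b, hb, rfl⟩, rfl⟩
  rw [mem_closedBall_zero_iff] at hb
  have hwp : ⟪v, w⟫_ℝ ≤ ⟪v, p⟫_ℝ := hmax ⟨w, hw, rfl⟩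
  have hbv : ⟪v, b⟫_ℝ ≤ ⟪v, v⟫_ℝ := calc
    ⟪v, b⟫_ℝ ≤ ‖v‖ * ‖b‖ := real_inner_le_norm v b
    _ ≤ ‖v‖ * ‖v‖ := by gcongr
    _ = ⟪v, v⟫_ℝ := (real_inner_self_eq_norm_mul_norm v).symm
  simp only [inner_add_right]
  linarith

end Normal

section PosHomogeneous

variable {E : Type*} [NormedAddCommGroup E] [InnerProductSpace ℝ E] {φ : E → ℝ}

theorem map_zero_of_pos_homogeneous (hhom : ∀ c : ℝ, 0 < c → ∀ x, φ (c • x) = c * φ x) :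
    φ 0 = 0 := by
  have h := hhom 2 two_pos 0
  rw [smul_zero] at h
  linarith

theorem inner_le_mul_of_forall_inner_le (hhom : ∀ c : ℝ, 0 < c → ∀ x, φ (c • x) = c * φ x)
    (hpos : ∀ x, x ≠ 0 → 0 < φ x) {v : E} {c : ℝ} (hc : ∀ w, φ w ≤ 1 → ⟪v, w⟫_ℝ ≤ c) (y : E) :
    ⟪v, y⟫_ℝ ≤ c * φ y := by
  rcases eq_or_ne y 0 with rfl | hy
  · simp [map_zero_of_pos_homogeneous hhom]
  have hφy : 0 < φ y := hpos y hy
  have h := hc ((φ y)⁻¹ • y) (by rw [hhom _ (inv_pos.mpr hφy), inv_mul_cancel₀ hφy.ne'])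
  rw [real_inner_smul_right, inv_mul_le_iff₀ hφy] at h
  linarith

end PosHomogeneous

theorem finsler_regularized_normal_property_general (d : ℕ)
    (φ : EuclideanSpace ℝ (Fin d) → ℝ)
    (hconv : ConvexOn ℝ Set.univ φ)
    (hhom : ∀ c : ℝ, 0 < c → ∀ x, φ (c • x) = c * φ x)
    (hpos : ∀ x, x ≠ 0 → 0 < φ x)
    (φs : EuclideanSpace ℝ (Fin d) → ℝ)
    (hφs : ∀ p, φs p = sSup ((fun q => ⟪p, q⟫_ℝ) '' {q | φ q ≤ 1}))
    (ζ : ℝ) (hζ : 0 < ζ)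
    (qs qb : EuclideanSpace ℝ (Fin d))
    (hqb : φ qb = 1)
    (hdist : ‖qs - qb‖ = ζ)
    (hclosest : Metric.infDist qs {x | φ x ≤ 1} = ζ) :
    (∀ y, φ qb + ⟪(φs (qs - qb))⁻¹ • (qs - qb), y - qb⟫_ℝ ≤ φ y) ∧
    ⟪qs - qb, qs⟫_ℝ
      = sSup ((fun z => ⟪qs - qb, z⟫_ℝ) '' ({x | φ x ≤ 1} + Metric.closedBall (0 : EuclideanSpace ℝ (Fin d)) ζ)) := by
  have hK : Convex ℝ {x | φ x ≤ 1} := by simpa using hconv.convex_le 1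
  have hmax := isGreatest_inner_image_of_infDist_eq_norm_sub hK hqb.le (hclosest.trans hdist.symm)
  set v := qs - qb
  have hdual : ∀ y, ⟪v, y⟫_ℝ ≤ ⟪v, qb⟫_ℝ * φ y :=
    inner_le_mul_of_forall_inner_le hhom hpos fun w hw => hmax.2 ⟨w, hw, rfl⟩
  have hv : v ≠ 0 := norm_pos_iff.mp (hdist ▸ hζ)
  have hvqb : 0 < ⟪v, qb⟫_ℝ := by
    refine pos_of_mul_pos_left ?_ (hpos v hv).le
    exact (real_inner_self_pos.mpr hv).trans_le (hdual v)
  refine ⟨fun y => ?_, ?_⟩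
  · rw [hφs, hmax.csSup_eq, hqb, real_inner_smul_left, inner_sub_right,
      mul_sub, inv_mul_cancel₀ hvqb.ne', add_sub_cancel, inv_mul_le_iff₀ hvqb]
    exact hdual y
  · have hqs : qs = qb + v := (add_sub_cancel qb qs).symm
    rw [← hdist, hmax.inner_image_add_closedBall.csSup_eq, ← hqs]

/-- If q* ∈ ∂E_ζ and q̄* ∈ {φ = 1} is its closest point in {φ ≤ 1}, then the
    normalized vector φ*(q*−q̄*)⁻¹ (q*−q̄*) belongs to ∂φ(q̄*), and q*−q̄* supports
    E_ζ at q*. -/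
theorem finsler_regularized_normal_property (d : ℕ)
    (φ : EuclideanSpace ℝ (Fin d) → ℝ)
    (hnonneg : ∀ x, 0 ≤ φ x)
    (hconv : ConvexOn ℝ Set.univ φ)
    (hhom : ∀ c : ℝ, 0 < c → ∀ x, φ (c • x) = c * φ x)
    (hpos : ∀ x, x ≠ 0 → 0 < φ x)
    (φs : EuclideanSpace ℝ (Fin d) → ℝ)
    (hφs : ∀ p, φs p = sSup ((fun q => ⟪p, q⟫_ℝ) '' {q | φ q ≤ 1}))
    (ζ : ℝ) (hζ : 0 < ζ)
    (qs qb : EuclideanSpace ℝ (Fin d))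
    (hqs : qs ∈ frontier ({x | φ x ≤ 1} + Metric.closedBall (0 : EuclideanSpace ℝ (Fin d)) ζ))
    (hqb : φ qb = 1)
    (hdist : ‖qs - qb‖ = ζ)
    (hclosest : Metric.infDist qs {x | φ x ≤ 1} = ζ) :
    (∀ y, φ qb + ⟪(φs (qs - qb))⁻¹ • (qs - qb), y - qb⟫_ℝ ≤ φ y) ∧
    ⟪qs - qb, qs⟫_ℝ
      = sSup ((fun z => ⟪qs - qb, z⟫_ℝ) '' ({x | φ x ≤ 1} + Metric.closedBall (0 : EuclideanSpace ℝ (Fin d)) ζ)) :=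
  finsler_regularized_normal_property_general d φ hconv hhom hpos φs hφs ζ hζ qs qb hqb hdist
    hclosest
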